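/- Fix c ∈ ℕ^{24} with all c_j ≥ 1 and ∏_{j=1}^{24} c_j = 1080. If d ∈ ℤ^{24} satisfies equation (BR24), then ∑_{j=1}^{24} c_j² d_j² = 2 · ∑_{j=1}^{24} d_j². -/

import Mathlib

/-!
Divide (BR24) by `∏_{d_j ≠ 0} (X^{d_j} − X^{-d_j})`: since
`X^{cm} − X^{-cm} = (X^m − X^{-m}) ∑_{i<c} X^{(2i+1-c)m}` and the sum equals `c` when
`m = 0`, (BR24) becomes `∏_j ∑_{i<c_j} X^{(2i+1-c_j)d_j} = σ₂(d) − σ₁(d) + 24`.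
Now substitute `X = e^ε` with `ε³ = 0`, i.e. apply the ring map `ℤ[X, X⁻¹] → ℚ[ε]/(ε³)`,
`X^n ↦ 1 + nε + n²ε²/2`. The left side becomes `1080 (1 + ∑_j d_j² (c_j² − 1) ε² / 6)` and
the right side `1080 + 180 ∑_j d_j² ε²`; comparing the coefficients of `ε²` gives the claim.
-/

open LaurentPolynomial Finset

/-- `r a = X^{2a} + X^{-2a}` in `ℤ[X, X⁻¹]`, where `X` plays the role of `ζ^{1/2}`. -/
noncomputable def rLaurent (a : ℤ) : LaurentPolynomial ℤ := T (2 * a) + T (-(2 * a))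

/-- `σ₁(d) = ∑_j r(d_j)`. -/
noncomputable def sigma1 {ℓ : ℕ} (d : Fin ℓ → ℤ) : LaurentPolynomial ℤ :=
  ∑ j, rLaurent (d j)

/-- `σ₂(d) = ∑_{i < j} r(d_i) r(d_j)`. -/
noncomputable def sigma2 {ℓ : ℕ} (d : Fin ℓ → ℤ) : LaurentPolynomial ℤ :=
  ∑ i, ∑ j ∈ univ.filter (fun j => i < j), rLaurent (d i) * rLaurent (d j)

/-- Equation (BR24):
`(∏_{j : d_j = 0} c_j) · ∏_{j : d_j ≠ 0} (X^{c_j d_j} − X^{-c_j d_j})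
   = (σ₂(d) − σ₁(d) + 24) · ∏_{j : d_j ≠ 0} (X^{d_j} − X^{-d_j})` in `ℤ[X, X⁻¹]`. -/
noncomputable def BR24 (c : Fin 24 → ℕ) (d : Fin 24 → ℤ) : Prop :=
  ((∏ j ∈ univ.filter (fun j => d j = 0), c j : ℕ) : LaurentPolynomial ℤ) *
      ∏ j ∈ univ.filter (fun j => d j ≠ 0),
        (T ((c j : ℤ) * d j) - T (-((c j : ℤ) * d j))) =
    (sigma2 d - sigma1 d + 24) *
      ∏ j ∈ univ.filter (fun j => d j ≠ 0), (T (d j) - T (-(d j)))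

theorem sq_sum_eq_sum_sq_add_two_mul_sum_lt {ι R : Type*} [CommSemiring R] [LinearOrder ι]
    [Fintype ι] (x : ι → R) :
    (∑ i, x i) ^ 2 = ∑ i, x i ^ 2 + 2 * ∑ i, ∑ j with i < j, x i * x j := by
  have hsplit (i j : ι) : x i * x j = (if i = j then x i * x j else 0) +
      ((if i < j then x i * x j else 0) + (if j < i then x i * x j else 0)) := by
    rcases lt_trichotomy i j with h | rfl | h
    · simp [h, h.ne, h.not_gt]
    · simp
    · simp [h, h.ne', h.not_gt]
  have hswap : ∑ i, ∑ j with j < i, x i * x j = ∑ i, ∑ j with i < j, x i * x j := by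
    rw [sum_comm' (t' := univ) (s' := fun j => univ.filter (j < ·)) (by simp)]
    simp_rw [mul_comm]
  rw [sq, sum_mul_sum, sum_congr rfl fun i _ => sum_congr rfl fun j _ => hsplit i j]
  simp only [sum_add_distrib, sum_ite_eq, mem_univ, if_true, ← sum_filter, hswap, ← sq]
  ring

theorem prod_one_add_mul_of_sq_eq_zero {ι R : Type*} [CommRing R] (s : Finset ι) (b : ι → R)
    {δ : R} (hδ : δ ^ 2 = 0) :
    ∏ i ∈ s, (1 + b i * δ) = 1 + (∑ i ∈ s, b i) * δ := by
  induction s using Finset.cons_induction with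
  | empty => simp
  | cons j s _ ih =>
    rw [prod_cons, ih, sum_cons]
    linear_combination b j * (∑ i ∈ s, b i) * hδ

theorem sum_range_centered (c : ℕ) : ∑ i ∈ range c, (2 * i + 1 - c : ℤ) = 0 := by
  induction c with
  | zero => simp
  | succ c ih =>
    rw [sum_range_succ]
    simp_rw [Nat.cast_succ, ← sub_sub]
    rw [sum_sub_distrib, ih]
    simp only [sum_const, card_range, nsmul_one]
    ring

theorem sum_range_centered_sq (c : ℕ) :
    3 * ∑ i ∈ range c, (2 * i + 1 - c : ℤ) ^ 2 = c ^ 3 - c := by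
  induction c with
  | zero => simp
  | succ c ih =>
    have h (i : ℕ) : (2 * i + 1 - (c + 1 : ℕ) : ℤ) ^ 2 =
        (2 * i + 1 - c) ^ 2 - 2 * (2 * i + 1 - c) + 1 := by
      push_cast; ring
    simp_rw [sum_range_succ, h, sum_add_distrib, sum_sub_distrib, ← mul_sum, sum_range_centered,
      sum_const, card_range]
    push_cast
    linear_combination ih

noncomputable def symmGeomSum (c : ℕ) (m : ℤ) : LaurentPolynomial ℤ :=
  ∑ i ∈ range c, T ((2 * i + 1 - c) * m)

theorem T_mul_sub_T_neg_mul (c : ℕ) (m : ℤ) :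
    T (c * m) - T (-(c * m)) = (T m - T (-m)) * symmGeomSum c m := by
  rw [← T_pow, ← mul_neg, ← T_pow, mul_comm, symmGeomSum, ← geom_sum₂_mul]
  refine congrArg (· * _) (sum_congr rfl fun i hi => ?_)
  have hic : i < c := mem_range.1 hi
  rw [T_pow, T_pow, ← T_add, Nat.cast_sub (Nat.le_sub_one_of_lt hic), Nat.cast_sub (by omega)]
  ring_nf

theorem symmGeomSum_zero_right (c : ℕ) : symmGeomSum c 0 = c := by
  simp [symmGeomSum]

theorem T_sub_T_neg_ne_zero {m : ℤ} (hm : m ≠ 0) :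
    (T m - T (-m) : LaurentPolynomial ℤ) ≠ 0 := by
  rw [sub_ne_zero]
  intro h
  have := congrArg (fun p : LaurentPolynomial ℤ => p.coeff m) h
  simp only [T_apply, if_true] at this
  omega

theorem BR24.prod_symmGeomSum {c : Fin 24 → ℕ} {d : Fin 24 → ℤ} (h : BR24 c d) :
    ∏ j, symmGeomSum (c j) (d j) = sigma2 d - sigma1 d + 24 := by
  have hzero : ((∏ j with d j = 0, c j : ℕ) : LaurentPolynomial ℤ) =
      ∏ j with d j = 0, symmGeomSum (c j) (d j) := by
    rw [Nat.cast_prod]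
    exact prod_congr rfl fun j hj => by rw [(mem_filter.1 hj).2, symmGeomSum_zero_right]
  have hne : ∏ j with d j ≠ 0, (T (d j) - T (-(d j)) : LaurentPolynomial ℤ) ≠ 0 :=
    prod_ne_zero_iff.2 fun j hj => T_sub_T_neg_ne_zero (mem_filter.1 hj).2
  rw [BR24, hzero] at h
  simp_rw [T_mul_sub_T_neg_mul, prod_mul_distrib] at h
  rw [← prod_filter_mul_prod_filter_not univ (fun j => d j = 0)]
  exact mul_right_cancel₀ hne (by linear_combination h)

section ExpEval

variable {A : Type*} [CommRing A] [Algebra ℚ A] {ε : A}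

noncomputable def expEval (hε : IsNilpotent ε) : LaurentPolynomial ℤ →ₐ[ℤ] A :=
  AddMonoidAlgebra.lift ℤ A ℤ
    { toFun := fun n => IsNilpotent.exp (Multiplicative.toAdd n • ε)
      map_one' := by simp [IsNilpotent.exp_zero]
      map_mul' := fun m n => by
        rw [toAdd_mul, add_smul]
        exact IsNilpotent.exp_add_of_commute (Commute.all _ _) (hε.smul _) (hε.smul _) }

theorem expEval_T (hε : IsNilpotent ε) (n : ℤ) :
    expEval hε (T n) = IsNilpotent.exp (n • ε) := by
  rw [T, expEval, AddMonoidAlgebra.lift_single, one_smul]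
  rfl

theorem IsNilpotent.exp_eq_of_pow_three_eq_zero {x : A} (hx : x ^ 3 = 0) :
    IsNilpotent.exp x = 1 + x + algebraMap ℚ A (1 / 2) * x ^ 2 := by
  simp [IsNilpotent.exp_eq_sum hx, sum_range_succ, Algebra.smul_def]

variable (hε : ε ^ 3 = 0)

theorem expEval_T_of_pow_three_eq_zero (n : ℤ) :
    expEval (.mk ε 3 hε) (T n) = 1 + n * ε + algebraMap ℚ A (n ^ 2 / 2) * ε ^ 2 := by
  rw [expEval_T, IsNilpotent.exp_eq_of_pow_three_eq_zero (by rw [smul_pow, hε, smul_zero]),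
    zsmul_eq_mul, show (n ^ 2 / 2 : ℚ) = 1 / 2 * n ^ 2 by ring, map_mul, map_pow, map_intCast]
  ring

theorem expEval_rLaurent (a : ℤ) :
    expEval (.mk ε 3 hε) (rLaurent a) = 2 + 4 * a ^ 2 * ε ^ 2 := by
  have h' : algebraMap ℚ A (((2 * a : ℤ) : ℚ) ^ 2 / 2) +
      algebraMap ℚ A (((-(2 * a) : ℤ) : ℚ) ^ 2 / 2) = ((4 * a ^ 2 : ℤ) : A) := by
    rw [← map_add, ← map_intCast (algebraMap ℚ A)]
    congr 1
    push_cast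
    ring
  rw [rLaurent, map_add, expEval_T_of_pow_three_eq_zero hε, expEval_T_of_pow_three_eq_zero hε]
  push_cast at h' ⊢
  linear_combination ε ^ 2 * h'

theorem expEval_sigma1 {ℓ : ℕ} (d : Fin ℓ → ℤ) :
    expEval (.mk ε 3 hε) (sigma1 d) = 2 * ℓ + 4 * (∑ j, d j ^ 2 : ℤ) * ε ^ 2 := by
  simp only [sigma1, map_sum, expEval_rLaurent hε, sum_add_distrib, sum_const, card_univ,
    Fintype.card_fin, nsmul_eq_mul, ← sum_mul, ← mul_sum]
  push_cast
  ring

theorem expEval_sigma2 {ℓ : ℕ} (d : Fin ℓ → ℤ) :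
    expEval (.mk ε 3 hε) (sigma2 d) =
      2 * ℓ * (ℓ - 1) + 8 * (ℓ - 1) * (∑ j, d j ^ 2 : ℤ) * ε ^ 2 := by
  have hsq : sigma1 d ^ 2 = ∑ j, rLaurent (d j) ^ 2 + 2 * sigma2 d :=
    sq_sum_eq_sum_sq_add_two_mul_sum_lt _
  replace hsq := congrArg (expEval (.mk ε 3 hε)) hsq
  simp only [map_pow, map_add, map_mul, map_sum, map_ofNat, expEval_rLaurent hε,
    expEval_sigma1 hε] at hsq
  have hsq_sum : ∑ j, (2 + 4 * (d j : A) ^ 2 * ε ^ 2) ^ 2 =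
      4 * ℓ + 16 * (∑ j, d j ^ 2 : ℤ) * ε ^ 2 := by
    have hsq_term (j : Fin ℓ) :
        (2 + 4 * (d j : A) ^ 2 * ε ^ 2) ^ 2 = 4 + 16 * (d j : A) ^ 2 * ε ^ 2 := by
      linear_combination 16 * (d j : A) ^ 4 * ε * hε
    simp only [hsq_term, sum_add_distrib, sum_const, card_univ, Fintype.card_fin, nsmul_eq_mul,
      ← sum_mul, ← mul_sum]
    push_cast
    ring
  have h2 : IsUnit (2 : A) := by
    rw [← map_ofNat (algebraMap ℚ A) 2]
    exact (IsUnit.mk0 (2 : ℚ) two_ne_zero).map _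
  refine h2.mul_left_cancel ?_
  linear_combination -hsq - hsq_sum + 16 * (∑ j, d j ^ 2 : ℤ) ^ 2 * ε * hε

theorem expEval_symmGeomSum (c : ℕ) (m : ℤ) :
    expEval (.mk ε 3 hε) (symmGeomSum c m) =
      c * (1 + algebraMap ℚ A (m ^ 2 * (c ^ 2 - 1) / 6) * ε ^ 2) := by
  have h1 : ∑ i ∈ range c, (((2 * i + 1 - c) * m : ℤ) : A) = 0 := by
    rw [← Int.cast_sum, ← sum_mul, sum_range_centered, zero_mul, Int.cast_zero]
  have h2 : (∑ i ∈ range c, ((((2 * i + 1 - c) * m : ℤ) : ℚ) ^ 2 / 2) : ℚ) =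
      c * (m ^ 2 * (c ^ 2 - 1) / 6) := by
    have := sum_range_centered_sq c
    qify at this
    push_cast at this ⊢
    simp_rw [mul_pow, ← sum_div, ← sum_mul]
    linear_combination (m ^ 2 / 6 : ℚ) * this
  rw [symmGeomSum, map_sum]
  simp_rw [expEval_T_of_pow_three_eq_zero hε]
  rw [sum_add_distrib, sum_add_distrib, ← sum_mul, ← sum_mul, ← map_sum, h1, h2, sum_const,
    card_range, nsmul_one, map_mul, map_natCast]
  ring

theorem expEval_prod_symmGeomSum {ι : Type*} [Fintype ι] (c : ι → ℕ) (d : ι → ℤ) :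
    expEval (.mk ε 3 hε) (∏ j, symmGeomSum (c j) (d j)) =
      (∏ j, c j : ℕ) *
        (1 + algebraMap ℚ A (∑ j, d j ^ 2 * (c j ^ 2 - 1) / 6) * ε ^ 2) := by
  have hε4 : (ε ^ 2) ^ 2 = 0 := by linear_combination ε * hε
  rw [map_prod]
  simp_rw [expEval_symmGeomSum hε]
  rw [prod_mul_distrib, prod_one_add_mul_of_sq_eq_zero _ _ hε4, ← map_sum, Nat.cast_prod]

end ExpEval

theorem AdjoinRoot.root_X_pow_pow_self {R : Type*} [CommRing R] (n : ℕ) :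
    AdjoinRoot.root (Polynomial.X ^ n : Polynomial R) ^ n = 0 := by
  rw [← AdjoinRoot.mk_X, ← map_pow, AdjoinRoot.mk_self]

theorem AdjoinRoot.root_X_pow_pow_ne_zero {R : Type*} [CommRing R] [Nontrivial R] {n k : ℕ}
    (h : k < n) : AdjoinRoot.root (Polynomial.X ^ n : Polynomial R) ^ k ≠ 0 := by
  rw [← AdjoinRoot.mk_X, ← map_pow, Ne, AdjoinRoot.mk_eq_zero, Polynomial.X_pow_dvd_iff]
  exact fun hk => by simpa using hk k h

theorem stmt_5_general (c : Fin 24 → ℕ) (hprod : ∏ j, c j = 1080)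
    (d : Fin 24 → ℤ) (hBR : BR24 c d) :
    ∑ j, (c j : ℤ) ^ 2 * (d j) ^ 2 = 2 * ∑ j, (d j) ^ 2 := by
  set ε := AdjoinRoot.root (Polynomial.X ^ 3 : Polynomial ℚ)
  have hε : ε ^ 3 = 0 := AdjoinRoot.root_X_pow_pow_self 3
  have h := congrArg (expEval (.mk ε 3 hε)) hBR.prod_symmGeomSum
  rw [expEval_prod_symmGeomSum hε, map_add, map_sub, expEval_sigma2 hε, expEval_sigma1 hε,
    map_ofNat, hprod] at h
  set W : ℚ := ∑ j, (d j : ℚ) ^ 2 * ((c j : ℚ) ^ 2 - 1) / 6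
  set V : ℤ := ∑ j, d j ^ 2
  have hcoeff : (1080 * W - 180 * V) • ε ^ 2 = 0 := by
    rw [Algebra.smul_def, map_sub, map_mul, map_mul, map_ofNat, map_ofNat, map_intCast]
    linear_combination h
  have hWV :=
    (smul_eq_zero.1 hcoeff).resolve_right (AdjoinRoot.root_X_pow_pow_ne_zero (by norm_num))
  have hW : 6 * W = ∑ j, (c j : ℚ) ^ 2 * (d j : ℚ) ^ 2 - V := by
    rw [mul_sum, Int.cast_sum, ← sum_sub_distrib]
    exact sum_congr rfl fun j _ => by push_cast; ring
  qify
  linear_combination -hW + hWV / 180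

theorem stmt_5 (c : Fin 24 → ℕ) (hc : ∀ j, 1 ≤ c j) (hprod : ∏ j, c j = 1080)
    (d : Fin 24 → ℤ) (hBR : BR24 c d) :
    ∑ j, (c j : ℤ) ^ 2 * (d j) ^ 2 = 2 * ∑ j, (d j) ^ 2 :=
  stmt_5_general c hprod d hBR
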